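/- arXiv:1403.1988 — 2 statements merged into one kernel-verified Lean document; each statement's English description precedes it below -/
import Mathlib

section
/- Fix 0 < p < 1 and let E : ℕ → ℝ satisfy E(0) = 0 and, for all n ≥ 1, E(n) = 1 + p·E(n−1) + ((1−p)/n)·Σ_{k=1}^{n} E(k−1). Let F : ℕ → ℝ satisfy F(0) = 0 and, for all n ≥ 1, F(n) = 1 + p·F(n−1) + ((1−p)/n)·Σ_{k=1}^{n} (E(n−k) + E(k−1)). Then (1−p)·F(n) − 2·H_n converges to −1 + 2·ln(1−p) as n → ∞. -/
/-!
Multiplying the single-entrance recurrence by `1 - p`, it is solved by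
`(1 - p) E(n) = ∑_{k ≤ n} (1 - p^k) / k`. In the two-entrance recurrence the two halves of the
sum are the same sum up to reflection, so subtracting twice the `E`-recurrence leaves
`D(n + 1) = p D(n) - 1` for `D = F - 2E`, whence `(1 - p) D(n) = p^n - 1`. Together,
`(1 - p) F(n) - 2 H_n = p^n - 1 - 2 ∑_{k ≤ n} p^k / k`, and the last sum is a partial sum of the
series `-log (1 - p) = ∑ p^k / k`.
-/

open Finset Filter

/-- The `n`-th harmonic number `H_n = ∑_{k=1}^n 1/k`, with `H 0 = 0`. -/
noncomputable def H (n : ℕ) : ℝ := ∑ k ∈ Finset.Icc 1 n, (1 : ℝ) / k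

section IccOne

variable {M : Type*} [AddCommMonoid M] (f : ℕ → M) (n : ℕ)

lemma sum_Icc_one_eq_sum_range : ∑ k ∈ Icc 1 n, f k = ∑ k ∈ range n, f (k + 1) := by
  rw [← Ico_add_one_right_eq_Icc, sum_Ico_eq_sum_range, Nat.add_sub_cancel]
  simp only [add_comm]

lemma sum_Icc_one_sub_one : ∑ k ∈ Icc 1 n, f (k - 1) = ∑ k ∈ range n, f k := by
  simp [sum_Icc_one_eq_sum_range]

lemma sum_Icc_one_reflect : ∑ k ∈ Icc 1 n, f (n - k) = ∑ k ∈ range n, f k := by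
  rw [sum_Icc_one_eq_sum_range, ← sum_range_reflect f n]
  simp only [Nat.sub_sub, add_comm]

end IccOne

lemma tendsto_sum_Icc_pow_div {p : ℝ} (hp : |p| < 1) :
    Tendsto (fun n : ℕ => ∑ k ∈ Icc 1 n, p ^ k / k) atTop (nhds (-Real.log (1 - p))) := by
  simpa [sum_Icc_one_eq_sum_range] using (Real.hasSum_pow_div_log_of_abs_lt_one hp).tendsto_sum_nat

/-- The closed form of `(1 - p) E(n)`. -/
noncomputable def scaledOccupancy (p : ℝ) (n : ℕ) : ℝ := ∑ k ∈ Icc 1 n, (1 - p ^ k) / k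

namespace scaledOccupancy

variable (p : ℝ) (n : ℕ)

lemma zero : scaledOccupancy p 0 = 0 := by simp [scaledOccupancy]

lemma succ : scaledOccupancy p (n + 1) = scaledOccupancy p n + (1 - p ^ (n + 1)) / (n + 1) := by
  rw [scaledOccupancy, sum_Icc_succ_top (by omega), Nat.cast_succ, scaledOccupancy]

lemma sub_H : scaledOccupancy p n - H n = -∑ k ∈ Icc 1 n, p ^ k / k := by
  rw [scaledOccupancy, H, ← sum_sub_distrib, ← sum_neg_distrib]
  congr! 1 with k
  ring

lemma one_sub_mul_sum_range :
    (1 - p) * ∑ m ∈ range (n + 1), scaledOccupancy p m =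
      (1 - p) * (n + 1) * (scaledOccupancy p n - 1) + 1 - p ^ (n + 1) := by
  induction n with
  | zero => simp [zero]
  | succ n ih =>
    rw [sum_range_succ, mul_add, ih, succ]
    push_cast
    field_simp
    ring

end scaledOccupancy

theorem one_sub_mul_E_eq {p : ℝ} {E : ℕ → ℝ} (hE0 : E 0 = 0)
    (hErec : ∀ n : ℕ, 1 ≤ n →
      E n = 1 + p * E (n - 1) + ((1 - p) / (n : ℝ)) * ∑ k ∈ Icc 1 n, E (k - 1))
    (n : ℕ) : (1 - p) * E n = scaledOccupancy p n := by
  induction n using Nat.strong_induction_on with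
  | _ n ih =>
  obtain _ | n := n
  · simp [hE0, scaledOccupancy.zero]
  have hsum : (1 - p) * ∑ k ∈ range (n + 1), E k =
      ∑ k ∈ range (n + 1), scaledOccupancy p k := by
    rw [mul_sum]
    exact sum_congr rfl fun k hk => ih k (mem_range.1 hk)
  rw [hErec (n + 1) le_add_self, Nat.add_sub_cancel, sum_Icc_one_sub_one, scaledOccupancy.succ]
  push_cast
  field_simp
  linear_combination (n + 1) * p * ih n (by omega) + (1 - p) * hsum +
    scaledOccupancy.one_sub_mul_sum_range p n

theorem one_sub_mul_F_sub_two_E {p : ℝ} {E F : ℕ → ℝ} (hE0 : E 0 = 0)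
    (hErec : ∀ n : ℕ, 1 ≤ n →
      E n = 1 + p * E (n - 1) + ((1 - p) / (n : ℝ)) * ∑ k ∈ Icc 1 n, E (k - 1))
    (hF0 : F 0 = 0)
    (hFrec : ∀ n : ℕ, 1 ≤ n →
      F n = 1 + p * F (n - 1) +
        ((1 - p) / (n : ℝ)) * ∑ k ∈ Icc 1 n, (E (n - k) + E (k - 1)))
    (n : ℕ) : (1 - p) * (F n - 2 * E n) = p ^ n - 1 := by
  induction n with
  | zero => simp [hF0, hE0]
  | succ n ih =>
    rw [hFrec (n + 1) le_add_self, hErec (n + 1) le_add_self, Nat.add_sub_cancel,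
      sum_add_distrib, sum_Icc_one_reflect, sum_Icc_one_sub_one]
    linear_combination p * ih

theorem stmt_5 (p : ℝ) (hp0 : 0 < p) (hp1 : p < 1)
    (E F : ℕ → ℝ) (hE0 : E 0 = 0)
    (hErec : ∀ n : ℕ, 1 ≤ n →
      E n = 1 + p * E (n - 1) + ((1 - p) / (n : ℝ)) * ∑ k ∈ Finset.Icc 1 n, E (k - 1))
    (hF0 : F 0 = 0)
    (hFrec : ∀ n : ℕ, 1 ≤ n →
      F n = 1 + p * F (n - 1) +
        ((1 - p) / (n : ℝ)) * ∑ k ∈ Finset.Icc 1 n, (E (n - k) + E (k - 1))) :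
    Tendsto (fun n : ℕ => (1 - p) * F n - 2 * H n) atTop
      (nhds (-1 + 2 * Real.log (1 - p))) := by
  have hlim := (((tendsto_sum_Icc_pow_div (abs_lt.2 ⟨by linarith, hp1⟩)).const_mul (-2)).add
    (tendsto_pow_atTop_nhds_zero_of_lt_one hp0.le hp1)).sub_const 1
  rw [show -1 + 2 * Real.log (1 - p) = -2 * -Real.log (1 - p) + 0 - 1 by ring]
  refine hlim.congr fun n => ?_
  linear_combination -one_sub_mul_F_sub_two_E hE0 hErec hF0 hFrec n -
    2 * one_sub_mul_E_eq hE0 hErec n - 2 * scaledOccupancy.sub_H p n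
end

section
/- Let L : ℕ → ℝ satisfy L(0) = 0 and, for all n ≥ 1, L(n) = 1 + (1/H_n)·Σ_{k=1}^{n} (1/k)·L(k−1). Then L(n)/ln(ln n) converges to 1 as n → ∞. -/
open Finset Filter

open Real

/-! `H (n+1) (L (n+1) - 1) - H n (L n - 1) = L n / (n+1)` together with `H (n+1) = H n + 1/(n+1)`
collapses the recursion to `L (n+1) - L n = 1 / ((n+1) H (n+1))`: `L` is, up to the constant
`L 0`, the partial sum of `ΔH_k / H_k`, a Riemann sum for `∫ dH / H = log H`. Comparing each
increment with `log H (k+1) - log H k` via `1 - 1/x ≤ log x ≤ x - 1` shows that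
`L n - log (H n)` decreases while `L n - 1/n - log (H n)` increases, so `L n = log (H n) + O(1)`;
and `log n ≤ H n ≤ 1 + log n` gives `log (H n) = log (log n) + O(1)`. -/

theorem tendsto_div_nhds_one_of_abs_sub_le {α : Type*} {l : Filter α} {f g : α → ℝ} {C : ℝ}
    (hg : Tendsto g l atTop) (hfg : ∀ᶠ x in l, |f x - g x| ≤ C) :
    Tendsto (fun x => f x / g x) l (nhds 1) := by
  have hbig : (f - g) =O[l] (fun _ => (1 : ℝ)) :=
    Asymptotics.IsBigO.of_bound C (hfg.mono fun x hx => by simpa using hx)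
  have hsmall : (fun _ => (1 : ℝ)) =o[l] g :=
    (Asymptotics.isLittleO_one_left_iff ℝ).2 (tendsto_abs_atTop_atTop.comp hg)
  exact (Asymptotics.isEquivalent_iff_tendsto_one (hg.eventually_ne_atTop 0)).1
    (hbig.trans_isLittleO hsmall)

lemma sub_div_le_log_sub_log {a b : ℝ} (ha : 0 < a) (hb : 0 < b) :
    (b - a) / b ≤ log b - log a := by
  have := one_sub_inv_le_log_of_pos (div_pos hb ha)
  rw [log_div hb.ne' ha.ne', inv_div] at this
  rwa [sub_div, div_self hb.ne']

lemma log_sub_log_le_sub_div {a b : ℝ} (ha : 0 < a) (hb : 0 < b) :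
    log b - log a ≤ (b - a) / a := by
  have := log_le_sub_one_of_pos (div_pos hb ha)
  rw [log_div hb.ne' ha.ne'] at this
  rwa [sub_div, div_self ha.ne']

lemma H_eq_harmonic (n : ℕ) : H n = harmonic n := by
  simp [H, harmonic_eq_sum_Icc]

lemma H_succ (n : ℕ) : H (n + 1) = H n + 1 / (n + 1) := by
  simp [H_eq_harmonic]

lemma H_succ_sub (n : ℕ) : H (n + 1) - H n = 1 / (n + 1) := by
  rw [H_succ]; ring

lemma H_one : H 1 = 1 := by simp [H]

lemma one_le_H {n : ℕ} (hn : 1 ≤ n) : 1 ≤ H n := by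
  induction n, hn using Nat.le_induction with
  | base => rw [H_one]
  | succ n _ ih =>
    rw [H_succ]
    have : (0 : ℝ) ≤ 1 / (n + 1) := by positivity
    linarith

lemma H_pos {n : ℕ} (hn : 1 ≤ n) : 0 < H n := zero_lt_one.trans_le (one_le_H hn)

lemma log_le_H (n : ℕ) : log n ≤ H n := by
  rw [H_eq_harmonic]
  refine le_trans ?_ (log_add_one_le_harmonic n)
  rcases n.eq_zero_or_pos with rfl | hn
  · simp
  · push_cast
    exact log_le_log (by positivity) (by linarith)

lemma H_le_one_add_log (n : ℕ) : H n ≤ 1 + log n := by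
  rw [H_eq_harmonic]
  exact harmonic_le_one_add_log n

lemma H_mul_sub_one_eq_sum {L : ℕ → ℝ}
    (hrec : ∀ n : ℕ, 1 ≤ n →
      L n = 1 + (1 / H n) * ∑ k ∈ Finset.Icc 1 n, (1 / (k : ℝ)) * L (k - 1))
    (n : ℕ) : H n * (L n - 1) = ∑ k ∈ Icc 1 n, (1 / (k : ℝ)) * L (k - 1) := by
  rcases n.eq_zero_or_pos with rfl | hn
  · simp [H]
  · have hH : H n ≠ 0 := (H_pos hn).ne'
    rw [hrec n hn]
    field_simp
    ring

lemma L_succ_sub {L : ℕ → ℝ}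
    (hrec : ∀ n : ℕ, 1 ≤ n →
      L n = 1 + (1 / H n) * ∑ k ∈ Finset.Icc 1 n, (1 / (k : ℝ)) * L (k - 1))
    (n : ℕ) : L (n + 1) - L n = 1 / ((n + 1) * H (n + 1)) := by
  have hsum := H_mul_sub_one_eq_sum hrec (n + 1)
  rw [sum_Icc_succ_top (by omega), ← H_mul_sub_one_eq_sum hrec n, Nat.add_sub_cancel,
    H_succ] at hsum
  have hH : H (n + 1) ≠ 0 := (H_pos (by omega)).ne'
  have key : H (n + 1) * (L (n + 1) - L n) = 1 / (n + 1) := by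
    rw [H_succ]
    push_cast at hsum
    linear_combination hsum
  rw [eq_div_iff (mul_ne_zero (by positivity) hH)]
  calc (L (n + 1) - L n) * ((n + 1) * H (n + 1))
      = (n + 1) * (H (n + 1) * (L (n + 1) - L n)) := by ring
    _ = 1 := by rw [key]; field_simp

lemma div_H_sub_div_H_succ_le {n : ℕ} (hn : 1 ≤ n) :
    1 / ((n + 1) * H n) - 1 / ((n + 1) * H (n + 1)) ≤ 1 / n - 1 / (n + 1) := by
  have ha := one_le_H hn
  have hb := one_le_H (n := n + 1) (by omega)
  have hn' : (1 : ℝ) ≤ n := by exact_mod_cast hn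
  have hlhs : 1 / ((n + 1) * H n) - 1 / ((n + 1) * H (n + 1)) =
      1 / ((n + 1) ^ 2 * H n * H (n + 1)) := by
    rw [H_succ] at hb ⊢
    field_simp
    ring
  have hrhs : 1 / (n : ℝ) - 1 / (n + 1) = 1 / (n * (n + 1)) := by
    field_simp
    ring
  rw [hlhs, hrhs]
  apply one_div_le_one_div_of_le (by positivity)
  nlinarith [mul_le_mul ha hb zero_le_one (by linarith : (0 : ℝ) ≤ H n)]

section

variable {L : ℕ → ℝ}

lemma antitoneOn_sub_log_H (hstep : ∀ n : ℕ, L (n + 1) - L n = 1 / ((n + 1) * H (n + 1))) :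
    AntitoneOn (fun n => L n - log (H n)) (Set.Ici 1) := by
  refine antitoneOn_nat_Ici_of_succ_le fun n hn => ?_
  have h := sub_div_le_log_sub_log (H_pos hn) (H_pos (n := n + 1) (by omega))
  rw [H_succ_sub, div_div, ← hstep] at h
  linarith

lemma monotoneOn_sub_inv_sub_log_H
    (hstep : ∀ n : ℕ, L (n + 1) - L n = 1 / ((n + 1) * H (n + 1))) :
    MonotoneOn (fun n : ℕ => L n - 1 / n - log (H n)) (Set.Ici 1) := by
  refine monotoneOn_nat_Ici_of_le_succ fun n hn => ?_
  have h := log_sub_log_le_sub_div (H_pos hn) (H_pos (n := n + 1) (by omega))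
  rw [H_succ_sub, div_div] at h
  have := div_H_sub_div_H_succ_le hn
  push_cast
  linarith [hstep n]

lemma abs_sub_log_H_le (hstep : ∀ n : ℕ, L (n + 1) - L n = 1 / ((n + 1) * H (n + 1)))
    {n : ℕ} (hn : 1 ≤ n) : |L n - log (H n)| ≤ |L 1| + 1 := by
  have hup := antitoneOn_sub_log_H hstep (Set.mem_Ici.2 le_rfl) (Set.mem_Ici.2 hn) hn
  have hlow := monotoneOn_sub_inv_sub_log_H hstep (Set.mem_Ici.2 le_rfl) (Set.mem_Ici.2 hn) hn
  have hinv : 0 ≤ 1 / (n : ℝ) := by positivity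
  simp only [H_one, log_one, Nat.cast_one] at hup hlow
  rw [abs_le]
  constructor <;> linarith [neg_abs_le (L 1), le_abs_self (L 1)]

end

lemma abs_log_H_sub_log_log_le {n : ℕ} (hn : 1 ≤ log n) :
    |log (H n) - log (log n)| ≤ log 2 := by
  have hlog := log_le_H n
  have hH : H n ≤ 2 * log n := by linarith [H_le_one_add_log n]
  have hlow := log_le_log (by linarith) hlog
  have hup := log_le_log (by linarith) hH
  rw [log_mul two_ne_zero (by linarith)] at hup
  rw [abs_le]
  constructor <;> linarith [log_nonneg one_le_two]

theorem stmt_13_general (L : ℕ → ℝ)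
    (hrec : ∀ n : ℕ, 1 ≤ n →
      L n = 1 + (1 / H n) * ∑ k ∈ Finset.Icc 1 n, (1 / (k : ℝ)) * L (k - 1)) :
    Tendsto (fun n : ℕ => L n / Real.log (Real.log n)) atTop (nhds 1) := by
  have hlog : Tendsto (fun n : ℕ => log n) atTop atTop :=
    tendsto_log_atTop.comp tendsto_natCast_atTop_atTop
  refine tendsto_div_nhds_one_of_abs_sub_le (tendsto_log_atTop.comp hlog)
    (C := |L 1| + 1 + log 2) ?_
  filter_upwards [eventually_ge_atTop 1, hlog.eventually_ge_atTop 1] with n hn hlogn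
  calc |L n - log (log n)| ≤ |L n - log (H n)| + |log (H n) - log (log n)| := abs_sub_le _ _ _
    _ ≤ |L 1| + 1 + log 2 :=
      add_le_add (abs_sub_log_H_le (L_succ_sub hrec) hn) (abs_log_H_sub_log_log_le hlogn)

theorem stmt_13 (L : ℕ → ℝ) (hL0 : L 0 = 0)
    (hrec : ∀ n : ℕ, 1 ≤ n →
      L n = 1 + (1 / H n) * ∑ k ∈ Finset.Icc 1 n, (1 / (k : ℝ)) * L (k - 1)) :
    Tendsto (fun n : ℕ => L n / Real.log (Real.log n)) atTop (nhds 1) :=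
  stmt_13_general L hrec
end
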